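/- With R and I as above, for all integers n and m one has sⁿtᵐ − t^{c} ∈ I, where c ∈ {0,1} is the residue of n + nm + m modulo 2. -/

import Mathlib

noncomputable section

abbrev R2 : Type := AddMonoidAlgebra ℤ (ℤ × ℤ)

def mono (n m : ℤ) : R2 := AddMonoidAlgebra.single (n, m) 1

def Igen : Set R2 :=
  {x | ∃ n : ℤ, x = mono n n - mono n 0} ∪
  {x | ∃ n m : ℤ, x = mono n m + mono (-n) (m - n)} ∪
  {x | ∃ n m : ℤ, x = mono n m + mono m n} ∪
  {x | ∃ n m : ℤ, x = mono n m * (1 - mono 0 1) ^ 2}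

def I : AddSubgroup R2 := AddSubgroup.closure Igen

abbrev A2 : Type := AddMonoidAlgebra (ZMod 2) (ZMod 2)

def tA (k : ZMod 2) : A2 := AddMonoidAlgebra.single k 1

def Jf (n m : ℤ) : ZMod 2 := ((n + n * m + m : ℤ) : ZMod 2)

def phi : R2 →ₗ[ℤ] A2 :=
  Finsupp.lsum ℤ (fun p : ℤ × ℤ => LinearMap.toSpanSingleton ℤ A2 (tA (Jf p.1 p.2))) ∘ₗ
    (AddMonoidAlgebra.coeffLinearEquiv ℤ).toLinearMap

def epsA : A2 →ₐ[ZMod 2] ZMod 2 := (AddMonoidAlgebra.lift (ZMod 2) (ZMod 2) (ZMod 2)) 1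

def ev1 : LaurentPolynomial ℤ →ₗ[ℤ] ℤ := Finsupp.lsum ℤ (fun _ => LinearMap.id) ∘ₗ
    (AddMonoidAlgebra.coeffLinearEquiv ℤ).toLinearMap

def lder : LaurentPolynomial ℤ →ₗ[ℤ] LaurentPolynomial ℤ :=
  Finsupp.lsum ℤ (fun n : ℤ =>
    LinearMap.toSpanSingleton ℤ (LaurentPolynomial ℤ) ((n : ℤ) • LaurentPolynomial.T (n - 1))) ∘ₗ
    (AddMonoidAlgebra.coeffLinearEquiv ℤ).toLinearMap

def ev2 : R2 →ₗ[ℤ] ZMod 2 :=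
  Finsupp.lsum ℤ (fun _ : ℤ × ℤ => LinearMap.toSpanSingleton ℤ (ZMod 2) 1) ∘ₗ
    (AddMonoidAlgebra.coeffLinearEquiv ℤ).toLinearMap

/-! Write `[n, m]` (`monoQuot n m`) for the class of `sⁿtᵐ` in `R ⧸ I`. The generators
`sⁿtᵐ(1 - t)²` make `m ↦ [n, m]` an arithmetic progression, and the generators `tᵐ + tᵐ` (the
case `n = 0` of `sⁿtᵐ + s⁻ⁿtᵐ⁻ⁿ`) make every `[0, m]` 2-torsion. Put `a = [0, 0]` and
`d = [0, 1] - [0, 0]`, so `2d = 0`. Antisymmetry `[n, m] = -[m, n]` then gives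
`[n, 0] = [0, n] = a + n d` and, since `[1, 1] = [1, 0]` makes `[1, ·]` constant,
`[n, 1] = -[1, n] = -[1, 0] = [0, 1]`. Hence `[n, m] = a + (n + nm + m) d`, which depends only on
the parity of `n + nm + m`. -/

theorem zsmul_eq_emod_two_zsmul {G : Type*} [AddGroup G] {x : G} (hx : x + x = 0) (k : ℤ) :
    k • x = (k % 2) • x := by
  conv_lhs => rw [← Int.emod_add_mul_ediv k 2]
  rw [add_zsmul, mul_comm, mul_zsmul, two_zsmul, hx, smul_zero, add_zero]

theorem eq_add_zsmul_of_sub_eq_sub {G : Type*} [AddCommGroup G] {f : ℤ → G}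
    (hf : ∀ k, f (k + 2) - f (k + 1) = f (k + 1) - f k) (m : ℤ) :
    f m = f 0 + m • (f 1 - f 0) := by
  suffices h : ∀ k : ℤ, f k = f 0 + k • (f 1 - f 0) ∧ f (k + 1) = f 0 + (k + 1) • (f 1 - f 0) from
    (h m).1
  intro k
  induction k using Int.induction_on with
  | zero => simp
  | succ k ih =>
    refine ⟨ih.2, ?_⟩
    rw [add_assoc, one_add_one_eq_two]
    linear_combination (norm := module) hf k + (2 : ℤ) • ih.2 - ih.1
  | pred k ih =>
    refine ⟨?_, by rw [sub_add_cancel]; exact ih.1⟩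
    have h := hf (-k - 1)
    rw [show -(k : ℤ) - 1 + 2 = -k + 1 by ring, sub_add_cancel] at h
    linear_combination (norm := module) h + (2 : ℤ) • ih.1 - ih.2

abbrev monoQuot (n m : ℤ) : R2 ⧸ I := mono n m

theorem coe_eq_zero_of_mem_Igen {x : R2} (hx : x ∈ Igen) : (x : R2 ⧸ I) = 0 :=
  (QuotientAddGroup.eq_zero_iff x).2 (AddSubgroup.subset_closure hx)

theorem monoQuot_self (n : ℤ) : monoQuot n n = monoQuot n 0 := by
  have := coe_eq_zero_of_mem_Igen (Or.inl (Or.inl (Or.inl ⟨n, rfl⟩)))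
  rwa [QuotientAddGroup.mk_sub, sub_eq_zero] at this

theorem monoQuot_add_monoQuot_neg (n m : ℤ) : monoQuot n m + monoQuot (-n) (m - n) = 0 := by
  have := coe_eq_zero_of_mem_Igen (Or.inl (Or.inl (Or.inr ⟨n, m, rfl⟩)))
  rwa [QuotientAddGroup.mk_add] at this

theorem monoQuot_add_monoQuot_swap (n m : ℤ) : monoQuot n m + monoQuot m n = 0 := by
  have := coe_eq_zero_of_mem_Igen (Or.inl (Or.inr ⟨n, m, rfl⟩))
  rwa [QuotientAddGroup.mk_add] at this

theorem mono_mul_mono (a b c d : ℤ) : mono a b * mono c d = mono (a + c) (b + d) := by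
  rw [mono, mono, AddMonoidAlgebra.single_mul_single, mul_one]
  rfl

theorem monoQuot_sub_eq_sub (n m : ℤ) :
    monoQuot n (m + 2) - monoQuot n (m + 1) = monoQuot n (m + 1) - monoQuot n m := by
  have e1 : mono n m * mono 0 1 = mono n (m + 1) := by rw [mono_mul_mono, add_zero]
  have e2 : mono n (m + 1) * mono 0 1 = mono n (m + 2) := by
    rw [mono_mul_mono, add_zero, add_assoc, one_add_one_eq_two]
  have h := coe_eq_zero_of_mem_Igen (Or.inr ⟨n, m, rfl⟩)
  rw [show mono n m * (1 - mono 0 1) ^ 2 = mono n m - 2 • mono n (m + 1) + mono n (m + 2) by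
    linear_combination (mono 0 1 - 2) * e1 + e2] at h
  simp only [QuotientAddGroup.mk_add, QuotientAddGroup.mk_sub, QuotientAddGroup.mk_nsmul] at h
  linear_combination (norm := module) h

theorem monoQuot_eq_add_zsmul (n m : ℤ) :
    monoQuot n m = monoQuot n 0 + m • (monoQuot n 1 - monoQuot n 0) :=
  eq_add_zsmul_of_sub_eq_sub (monoQuot_sub_eq_sub n) m

theorem monoQuot_zero_add_self (m : ℤ) : monoQuot 0 m + monoQuot 0 m = 0 := by
  simpa using monoQuot_add_monoQuot_neg 0 m

theorem monoQuot_swap (n m : ℤ) : monoQuot n m = -monoQuot m n :=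
  eq_neg_of_add_eq_zero_left (monoQuot_add_monoQuot_swap n m)

theorem monoQuot_zero_right (n : ℤ) : monoQuot n 0 = monoQuot 0 n := by
  rw [monoQuot_swap, neg_eq_of_add_eq_zero_left (monoQuot_zero_add_self n)]

theorem monoQuot_one_right (n : ℤ) : monoQuot n 1 = monoQuot 0 1 := by
  rw [monoQuot_swap, monoQuot_eq_add_zsmul 1 n, monoQuot_self, sub_self, smul_zero, add_zero,
    monoQuot_swap 1 0, neg_neg]

theorem monoQuot_zero_sub_add_self (a b : ℤ) :
    (monoQuot 0 b - monoQuot 0 a) + (monoQuot 0 b - monoQuot 0 a) = 0 := by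
  rw [sub_add_sub_comm, monoQuot_zero_add_self, monoQuot_zero_add_self, sub_zero]

theorem monoQuot_eq_monoQuot_zero_zero_add (n m : ℤ) :
    monoQuot n m = monoQuot 0 0 + (n + n * m + m) • (monoQuot 0 1 - monoQuot 0 0) := by
  rw [monoQuot_eq_add_zsmul n m, monoQuot_one_right, monoQuot_zero_right, monoQuot_eq_add_zsmul 0 n]
  linear_combination (norm := module) (-(n * m)) • monoQuot_zero_sub_add_self 0 1

theorem stmt5 : ∀ n m : ℤ, mono n m - mono 0 ((n + n * m + m) % 2) ∈ I := by
  intro n m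
  rw [← QuotientAddGroup.eq_iff_sub_mem]
  change monoQuot n m = monoQuot 0 _
  rw [monoQuot_eq_monoQuot_zero_zero_add 0, monoQuot_eq_monoQuot_zero_zero_add n m,
    zsmul_eq_emod_two_zsmul (monoQuot_zero_sub_add_self 0 1),
    zero_mul, zero_add, zero_add]
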